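/- arXiv:2601.01421 — 7 statements merged into one kernel-verified Lean document; each statement's English description precedes it below -/
import Mathlib

section
/- Let c be a choice function on a finite nonempty set X. Then for every strict linear order ▷ on X there is a rationalization by self-punishment of c by ▷; concretely, for every menu A one has c(A) = max(A, ▷_i) where i = |{y ∈ X : y ▷ c(A)}|, and 0 ≤ i ≤ |X|−1. -/
variable {X : Type*}

/-- A strict linear order: asymmetric, transitive, complete. -/
def IsSLO (r : X → X → Prop) : Prop :=
  (∀ a b : X, r a b → ¬ r b a) ∧ (∀ a b d : X, r a b → r b d → r a d) ∧
    (∀ a b : X, a ≠ b → r a b ∨ r b a)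

/-- The set of the top `i` elements of `X` with respect to `r`
(those with fewer than `i` elements strictly above them). -/
def topSet (r : X → X → Prop) (i : ℕ) : Set X := {a | Set.ncard {b | r b a} < i}

/-- The `i`-th harmful distortion of `r`: the top `i` elements are moved,
in reverse order, below all the other elements. -/
def harmful (r : X → X → Prop) (i : ℕ) : X → X → Prop := fun a b =>
  (b ∈ topSet r i ∧ (a ∈ topSet r i → r b a)) ∨
    (a ∉ topSet r i ∧ b ∉ topSet r i ∧ r a b)

/-- A choice function selects an element from every nonempty menu. -/
def IsChoice (c : Finset X → X) : Prop := ∀ A : Finset X, A.Nonempty → c A ∈ A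

/-- `x` is the `r`-maximum of the menu `A`. -/
def IsMaxOf (r : X → X → Prop) (A : Finset X) (x : X) : Prop :=
  x ∈ A ∧ ∀ y ∈ A, y ≠ x → r x y

/-- A reversal (violation of WARP) of `c`. -/
def IsReversal [DecidableEq X] (c : Finset X → X) (A B : Finset X) : Prop :=
  A.Nonempty ∧ B.Nonempty ∧ A ≠ B ∧ c A ≠ c B ∧ c A ∈ A ∩ B ∧ c B ∈ A ∩ B

/-- `I` is (the index set of) a rationalization by self-punishment of `c` by `r`. -/
def RSP [Fintype X] (c : Finset X → X) (r : X → X → Prop) (I : Finset ℕ) : Prop :=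
  I.Nonempty ∧ (∀ i ∈ I, i ≤ Fintype.card X - 1) ∧
    ∀ A : Finset X, A.Nonempty → ∃ i ∈ I, IsMaxOf (harmful r i) A (c A)

/-- The degree of self-punishment of `c`: the minimum over all strict linear orders `r`
and all rationalizations by self-punishment of `c` by `r` of the maximal index used. -/
noncomputable def sp [Fintype X] (c : Finset X → X) : ℕ :=
  sInf { m : ℕ | ∃ r : X → X → Prop, IsSLO r ∧ ∃ I : Finset ℕ,
    RSP c r I ∧ m ∈ I ∧ ∀ i ∈ I, i ≤ m }

/-- `c` is inconsistent: every ordered pair of distinct items is selected in some reversal. -/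
def Inconsistent [DecidableEq X] (c : Finset X → X) : Prop :=
  ∀ x y : X, x ≠ y → ∃ A B : Finset X, IsReversal c A B ∧ c A = x ∧ c B = y

/-- The revealed preference `▷^{c,x}`. -/
def cxPref (c : Finset X → X) (x : X) : X → X → Prop := fun y z =>
  (y = x ∧ z ≠ x) ∨
    (y ≠ x ∧ z ≠ x ∧ y ≠ z ∧ ∃ A : Finset X, x ∉ A ∧ z ∈ A ∧ c A = y)

/-- `c` violates WARP under constant nonreciprocal selection of `j` items. -/
def ViolatesCNS [Fintype X] [DecidableEq X] (c : Finset X → X) (j : ℕ) : Prop :=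
  (∀ D : Finset X, D.card < j → ∃ A B : Finset X, IsReversal c A B ∧ c A ∉ D ∧ c B ∉ D) ∧
    ∃ xs : Finset X, xs.card = j ∧
      (∀ A B : Finset X, IsReversal c A B → c A ∈ xs ∨ c B ∈ xs) ∧
      (∀ x ∈ xs, ∃ A B : Finset X, ∃ y : X, IsReversal c A B ∧ y ∉ xs ∧
        ((c A = x ∧ c B = y) ∨ (c A = y ∧ c B = x)))

/-- The relation `▷^c` built from the witnesses `x 1, …, x j`. -/
def witnessPref (c : Finset X → X) (x : ℕ → X) (j : ℕ) : X → X → Prop := fun y z =>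
  (∃ g h : ℕ, 1 ≤ g ∧ g < h ∧ h ≤ j ∧ y = x g ∧ z = x h) ∨
    ((∀ g : ℕ, 1 ≤ g → g ≤ j → y ≠ x g) ∧ (∀ g : ℕ, 1 ≤ g → g ≤ j → z ≠ x g) ∧
      ∃ A : Finset X, z ∈ A ∧ c A = y) ∨
    ((∃ g : ℕ, 1 ≤ g ∧ g ≤ j ∧ y = x g) ∧ (∀ g : ℕ, 1 ≤ g → g ≤ j → z ≠ x g))

theorem IsSLO.irrefl {r : X → X → Prop} (hr : IsSLO r) (a : X) : ¬ r a a :=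
  fun h => hr.1 a a h h

section Rank

variable {r : X → X → Prop}

theorem ncard_setOf_rel_lt_of_rel [Finite X] (hirr : ∀ a, ¬ r a a)
    (htrans : ∀ a b d, r a b → r b d → r a d) {a b : X} (hab : r a b) :
    Set.ncard {y | r y a} < Set.ncard {y | r y b} :=
  Set.ncard_lt_ncard ⟨fun _ hy => htrans _ _ _ hy hab, fun hsub => hirr a (hsub hab)⟩

theorem ncard_setOf_rel_le_card_sub_one [Fintype X] (hirr : ∀ a, ¬ r a a) (x : X) :
    Set.ncard {y | r y x} ≤ Fintype.card X - 1 :=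
  calc Set.ncard {y | r y x} ≤ Set.ncard ({x}ᶜ : Set X) :=
        Set.ncard_le_ncard fun y hy (hyx : y = x) => hirr x (hyx ▸ hy)
    _ = Fintype.card X - 1 := by
        rw [Set.ncard_compl, Set.ncard_singleton, Nat.card_eq_fintype_card]

/-- The elements strictly above `x` are exactly the ones the distortion sends to the bottom,
while `x` and everything below it keep their order. -/
theorem isMaxOf_harmful_ncard_setOf_rel [Finite X] (hr : IsSLO r) {A : Finset X} {x : X}
    (hx : x ∈ A) : IsMaxOf (harmful r (Set.ncard {y | r y x})) A x := by
  have hx_top : x ∉ topSet r (Set.ncard {y | r y x}) := lt_irrefl (Set.ncard {y | r y x})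
  refine ⟨hx, fun y _ hyx => ?_⟩
  by_cases hy_top : y ∈ topSet r (Set.ncard {y | r y x})
  · exact Or.inl ⟨hy_top, fun h => absurd h hx_top⟩
  · refine Or.inr ⟨hx_top, hy_top, (hr.2.2 x y hyx.symm).resolve_right fun hyx' => ?_⟩
    exact hy_top (ncard_setOf_rel_lt_of_rel hr.irrefl hr.2.1 hyx')

end Rank

theorem rsp_Iic_of_forall_isMaxOf [Fintype X] {c : Finset X → X} {r : X → X → Prop}
    (h : ∀ A : Finset X, A.Nonempty →
      ∃ i ≤ Fintype.card X - 1, IsMaxOf (harmful r i) A (c A)) :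
    RSP c r (Finset.Iic (Fintype.card X - 1)) :=
  ⟨⟨0, Finset.mem_Iic.mpr (Nat.zero_le _)⟩, fun _ hi => Finset.mem_Iic.mp hi,
    fun A hA => (h A hA).imp fun _ ⟨hi, hmax⟩ => ⟨Finset.mem_Iic.mpr hi, hmax⟩⟩

theorem stmt1_general [Fintype X] (c : Finset X → X) (hc : IsChoice c)
    (r : X → X → Prop) (hr : IsSLO r) :
    (∀ A : Finset X, A.Nonempty →
      Set.ncard {y : X | r y (c A)} ≤ Fintype.card X - 1 ∧
      IsMaxOf (harmful r (Set.ncard {y : X | r y (c A)})) A (c A)) ∧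
    ∃ I : Finset ℕ, RSP c r I := by
  have key : ∀ A : Finset X, A.Nonempty →
      Set.ncard {y : X | r y (c A)} ≤ Fintype.card X - 1 ∧
      IsMaxOf (harmful r (Set.ncard {y : X | r y (c A)})) A (c A) := fun A hA =>
    ⟨ncard_setOf_rel_le_card_sub_one hr.irrefl (c A),
      isMaxOf_harmful_ncard_setOf_rel hr (hc A hA)⟩
  exact ⟨key, _, rsp_Iic_of_forall_isMaxOf fun A hA => ⟨_, key A hA⟩⟩

theorem stmt1 [Fintype X] [Nonempty X] (c : Finset X → X) (hc : IsChoice c)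
    (r : X → X → Prop) (hr : IsSLO r) :
    (∀ A : Finset X, A.Nonempty →
      Set.ncard {y : X | r y (c A)} ≤ Fintype.card X - 1 ∧
      IsMaxOf (harmful r (Set.ncard {y : X | r y (c A)})) A (c A)) ∧
    ∃ I : Finset ℕ, RSP c r I :=
  stmt1_general c hc r hr
end

section
/- For every integer k > 1 there exists a finite set X with |X| = 2k and a choice function c on X such that every choice function c′ on X satisfying c′(A) = c(A) for all menus A of cardinality at least k is inconsistent. Consequently, the property of a choice function of being NOT inconsistent is a tail-fail property. -/
variable {X : Type*}

/-!
Work on `X = ℤ/n` with `n ≥ 4` and let `c` pick `z + 1` from the menu `X \ {z}` and `z - 1` from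
`X \ {z, z + 1}`. For `x ≠ y`, the menu `X \ {x - 1}` contains `y` and selects `x` unless `y = x - 1`,
and in that case `X \ {x + 1, x + 2}` does. These menus have at least `n - 2` elements, so for
`k ≤ n - 2` every `c'` that agrees with `c` on menus of size at least `k` still selects `x` from a
menu containing both `x` and `y`, for every ordered pair; the two menus realising `(x, y)` and
`(y, x)` form a reversal.
-/

theorem inconsistent_of_forall_exists_mem_eq {X : Type*} [DecidableEq X] {c : Finset X → X}
    (h : ∀ x y : X, x ≠ y → ∃ A : Finset X, x ∈ A ∧ y ∈ A ∧ c A = x) : Inconsistent c := by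
  intro x y hxy
  obtain ⟨A, hxA, hyA, hA⟩ := h x y hxy
  obtain ⟨B, hyB, hxB, hB⟩ := h y x hxy.symm
  have hAB : c A ≠ c B := by rwa [hA, hB]
  refine ⟨A, B, ⟨⟨x, hxA⟩, ⟨y, hyB⟩, fun h => hAB (h ▸ rfl), hAB, ?_, ?_⟩, hA, hB⟩
  · rw [hA]; exact Finset.mem_inter.mpr ⟨hxA, hxB⟩
  · rw [hB]; exact Finset.mem_inter.mpr ⟨hyA, hyB⟩

section GapChoice

variable {n : ℕ} [NeZero n]
open scoped Fin.CommRing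

theorem Fin.ne_of_sub_eq_natCast {a b : Fin n} {m : ℕ} (h0 : 0 < m) (hm : m < n)
    (h : b - a = m) : a ≠ b := by
  rintro rfl
  rw [sub_self, eq_comm, Fin.natCast_eq_zero] at h
  exact absurd (Nat.le_of_dvd h0 h) (by omega)

noncomputable def gapChoice (A : Finset (Fin n)) : Fin n :=
  if h : ∃ z, Aᶜ = {z} then h.choose + 1
  else if h : ∃ z, Aᶜ = {z, z + 1} then h.choose - 1
  else if h : A.Nonempty then A.min' h else 0

theorem gapChoice_compl_singleton (z : Fin n) : gapChoice ({z}ᶜ : Finset (Fin n)) = z + 1 := by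
  have h : ∃ w, ({z}ᶜ : Finset (Fin n))ᶜ = {w} := ⟨z, compl_compl _⟩
  have hz : h.choose = z :=
    (Finset.singleton_injective (by simpa only [compl_compl] using h.choose_spec)).symm
  rw [gapChoice, dif_pos h, hz]

theorem Fin.eq_of_pair_add_one_eq (hn : 3 ≤ n) {z w : Fin n}
    (h : ({z, z + 1} : Finset (Fin n)) = {w, w + 1}) : z = w := by
  have hz : z ∈ ({w, w + 1} : Finset (Fin n)) := h ▸ by simp
  have hw : w ∈ ({z, z + 1} : Finset (Fin n)) := h ▸ by simp
  simp only [Finset.mem_insert, Finset.mem_singleton] at hz hw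
  rcases hz with hz | hz
  · exact hz
  rcases hw with hw | hw
  · exact hw.symm
  exfalso
  refine Fin.ne_of_sub_eq_natCast (a := z) (b := z + 2) (m := 2) (by omega) (by omega)
    (by push_cast; ring) ?_
  linear_combination hz + hw

theorem gapChoice_compl_pair (hn : 3 ≤ n) (z : Fin n) :
    gapChoice ({z, z + 1}ᶜ : Finset (Fin n)) = z - 1 := by
  have h1 : ¬ ∃ w, ({z, z + 1}ᶜ : Finset (Fin n))ᶜ = {w} := by
    rintro ⟨w, hw⟩
    have hcard := congrArg Finset.card hw
    rw [compl_compl, Finset.card_pair (Fin.ne_of_sub_eq_natCast (m := 1) one_pos (by omega)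
      (by push_cast; ring)), Finset.card_singleton] at hcard
    omega
  have h2 : ∃ w, ({z, z + 1}ᶜ : Finset (Fin n))ᶜ = {w, w + 1} := ⟨z, compl_compl _⟩
  have hz : h2.choose = z :=
    (Fin.eq_of_pair_add_one_eq hn (by simpa only [compl_compl] using h2.choose_spec)).symm
  rw [gapChoice, dif_neg h1, dif_pos h2, hz]

theorem isChoice_gapChoice (hn : 3 ≤ n) : IsChoice (gapChoice (n := n)) := by
  intro A hA
  by_cases h1 : ∃ z, Aᶜ = {z}
  · obtain ⟨z, hz⟩ := h1
    rw [← compl_compl A, hz, gapChoice_compl_singleton, Finset.mem_compl, Finset.mem_singleton]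
    exact (Fin.ne_of_sub_eq_natCast (m := 1) one_pos (by omega) (by push_cast; ring)).symm
  by_cases h2 : ∃ z, Aᶜ = {z, z + 1}
  · obtain ⟨z, hz⟩ := h2
    rw [← compl_compl A, hz, gapChoice_compl_pair hn, Finset.mem_compl, Finset.mem_insert,
      Finset.mem_singleton, not_or]
    exact ⟨Fin.ne_of_sub_eq_natCast (m := 1) one_pos (by omega) (by push_cast; ring),
      Fin.ne_of_sub_eq_natCast (m := 2) (by omega) (by omega) (by push_cast; ring)⟩
  rw [gapChoice, dif_neg h1, dif_neg h2, dif_pos hA]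
  exact A.min'_mem hA

theorem exists_large_menu_gapChoice_eq (hn : 4 ≤ n) {x y : Fin n} (hxy : x ≠ y) :
    ∃ A : Finset (Fin n), x ∈ A ∧ y ∈ A ∧ n ≤ A.card + 2 ∧ gapChoice A = x := by
  by_cases hy : y = x - 1
  · subst hy
    refine ⟨{x + 1, x + 2}ᶜ, ?_, ?_, ?_, ?_⟩
    · simp only [Finset.mem_compl, Finset.mem_insert, Finset.mem_singleton, not_or]
      exact ⟨Fin.ne_of_sub_eq_natCast (m := 1) one_pos (by omega) (by push_cast; ring),
        Fin.ne_of_sub_eq_natCast (m := 2) (by omega) (by omega) (by push_cast; ring)⟩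
    · simp only [Finset.mem_compl, Finset.mem_insert, Finset.mem_singleton, not_or]
      exact ⟨Fin.ne_of_sub_eq_natCast (m := 2) (by omega) (by omega) (by push_cast; ring),
        Fin.ne_of_sub_eq_natCast (m := 3) (by omega) (by omega) (by push_cast; ring)⟩
    · have := Finset.card_le_two (a := x + 1) (b := x + 2)
      rw [Finset.card_compl, Fintype.card_fin]
      omega
    · have h := gapChoice_compl_pair (by omega) (x + 1)
      rwa [show x + 1 + 1 = x + 2 by ring, add_sub_cancel_right] at h
  · refine ⟨{x - 1}ᶜ, ?_, ?_, ?_, ?_⟩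
    · rw [Finset.mem_compl, Finset.mem_singleton]
      exact (Fin.ne_of_sub_eq_natCast (m := 1) one_pos (by omega) (by push_cast; ring)).symm
    · rwa [Finset.mem_compl, Finset.mem_singleton]
    · rw [Finset.card_compl, Fintype.card_fin, Finset.card_singleton]
      omega
    · rw [gapChoice_compl_singleton, sub_add_cancel]

end GapChoice

theorem exists_isChoice_inconsistent_of_agree_on_large_menus {n k : ℕ} (hn : 4 ≤ n)
    (hk : k + 2 ≤ n) :
    ∃ c : Finset (Fin n) → Fin n, IsChoice c ∧
      ∀ c' : Finset (Fin n) → Fin n,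
        (∀ A : Finset (Fin n), A.Nonempty → k ≤ A.card → c' A = c A) → Inconsistent c' := by
  have : NeZero n := ⟨by omega⟩
  refine ⟨gapChoice, isChoice_gapChoice (by omega), fun c' hagree => ?_⟩
  refine inconsistent_of_forall_exists_mem_eq fun x y hxy => ?_
  obtain ⟨A, hxA, hyA, hcard, hA⟩ := exists_large_menu_gapChoice_eq hn hxy
  exact ⟨A, hxA, hyA, (hagree A ⟨x, hxA⟩ (by omega)).trans hA⟩

theorem stmt2 :
    (∀ k : ℕ, 1 < k →
      ∃ c : Finset (Fin (2 * k)) → Fin (2 * k), IsChoice c ∧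
        ∀ c' : Finset (Fin (2 * k)) → Fin (2 * k), IsChoice c' →
          (∀ A : Finset (Fin (2 * k)), A.Nonempty → k ≤ A.card → c' A = c A) →
          Inconsistent c') ∧
    (∀ k : ℕ, ∃ n : ℕ, k < n ∧
      ∃ c : Finset (Fin n) → Fin n, IsChoice c ∧
        ∀ c' : Finset (Fin n) → Fin n, IsChoice c' →
          (∀ A : Finset (Fin n), A.Nonempty → k ≤ A.card → c' A = c A) →
          Inconsistent c') := by
  refine ⟨fun k hk => ?_, fun k => ⟨k + 4, by omega, ?_⟩⟩
  · obtain ⟨c, hc, hinc⟩ :=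
      exists_isChoice_inconsistent_of_agree_on_large_menus (n := 2 * k) (k := k) (by omega) (by omega)
    exact ⟨c, hc, fun c' _ => hinc c'⟩
  · obtain ⟨c, hc, hinc⟩ :=
      exists_isChoice_inconsistent_of_agree_on_large_menus (n := k + 4) (k := k) (by omega) (by omega)
    exact ⟨c, hc, fun c' _ => hinc c'⟩
end

section
/- Let c be a choice function on a finite nonempty set X with |X| ≥ 2. Then c is weakly harmful (i.e., sp(c) = 1) if and only if c violates WARP under constant selection, i.e., c has at least one reversal and there exists x* ∈ X such that every reversal (A, B) of c satisfies c(A) = x* or c(B) = x*. -/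
variable {X : Type*}

/-!
In `▷₀ = ▷` and in `▷₁` every element other than the `▷`-top `x` keeps its position relative to
all elements except `x`. So if every choice is the maximum of its menu for `▷₀` or `▷₁`, two
distinct choices that both differ from `x` cannot each be available in the other's menu: every
reversal selects `x`. With `▷₀` alone no reversal is possible at all.

Conversely, if every reversal selects `x`, then `c` satisfies WARP on the menus avoiding `x`, so
the preference revealed on those menus, with `x` put on top, is a strict partial order; let `▷`
be a linear extension. Menus where `c` selects `x` or that omit `x` are rationalized by `▷`.
On a menu `A ∋ x` with `c A ≠ x`, removing `x` does not change the choice, so `c A` beats the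
rest of `A` in `▷`, and `▷₁`, which sends `x` to the bottom, rationalizes `A`.
If `c` has no reversal, the construction applies to `x := c X`; as no menu containing `x` can then
choose anything else, `▷` alone rationalizes `c`.
-/

theorem Nat.sInf_eq_one_iff {s : Set ℕ} : sInf s = 1 ↔ 1 ∈ s ∧ 0 ∉ s := by
  constructor
  · intro h
    have hs : s.Nonempty := Set.nonempty_iff_ne_empty.2 fun he => by simp [he] at h
    exact ⟨h ▸ Nat.sInf_mem hs, fun h0 => by simp [Nat.sInf_eq_zero.2 (Or.inl h0)] at h⟩
  · rintro ⟨h1, h0⟩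
    have hne : sInf s ≠ 0 := fun h => by
      rcases Nat.sInf_eq_zero.1 h with h | h
      exacts [h0 h, by simp [h] at h1]
    have := Nat.sInf_le h1
    omega

theorem exists_isSLO_of_isStrictOrder (p : X → X → Prop) [IsStrictOrder X p] :
    ∃ r, IsSLO r ∧ ∀ a b, p a b → r a b := by
  let _ : PartialOrder X := partialOrderOfSO p
  obtain ⟨s, hs, hps⟩ := extend_partialOrder ((· ≤ ·) : X → X → Prop)
  refine ⟨fun a b => a ≠ b ∧ s a b, ⟨?_, ?_, ?_⟩, fun a b h => ⟨?_, hps a b (Or.inr h)⟩⟩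
  · rintro a b ⟨hab, h₁⟩ ⟨-, h₂⟩
    exact hab (antisymm h₁ h₂)
  · rintro a b d ⟨hab, h₁⟩ ⟨-, h₂⟩
    exact ⟨fun had => hab (antisymm h₁ (had ▸ h₂)), _root_.trans h₁ h₂⟩
  · intro a b hab
    rcases total_of s a b with h | h
    exacts [Or.inl ⟨hab, h⟩, Or.inr ⟨hab.symm, h⟩]
  · rintro rfl
    exact irrefl a h

section Harmful

variable {r : X → X → Prop} {i k : ℕ} {a b : X}

@[simp]
theorem topSet_zero (r : X → X → Prop) : topSet r 0 = ∅ := by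
  ext
  simp [topSet]

theorem topSet_mono (h : i ≤ k) : topSet r i ⊆ topSet r k :=
  fun _ ha => lt_of_lt_of_le ha h

theorem mem_topSet_one [Finite X] : a ∈ topSet r 1 ↔ ∀ b, ¬ r b a := by
  simp [topSet, Set.ncard_eq_zero (Set.toFinite _),
    Set.eq_empty_iff_forall_notMem]

theorem topSet_one_subsingleton [Finite X] (hr : IsSLO r) : (topSet r 1).Subsingleton := by
  intro a ha b hb
  by_contra hab
  rcases hr.2.2 a b hab with h | h
  exacts [mem_topSet_one.1 hb a h, mem_topSet_one.1 ha b h]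

theorem topSet_one_eq_singleton [Finite X] (hr : IsSLO r) (ha : ∀ b, b ≠ a → r a b) :
    topSet r 1 = {a} := by
  ext b
  rw [mem_topSet_one, Set.mem_singleton_iff]
  constructor
  · intro hb
    by_contra hba
    exact hb a (ha b hba)
  · rintro rfl d hd
    by_cases hdb : d = b
    · subst hdb
      exact hr.1 d d hd hd
    · exact hr.1 _ _ hd (ha d hdb)

theorem harmful_zero (r : X → X → Prop) : harmful r 0 = r := by
  funext a b
  simp [harmful]

theorem rel_of_harmful (h : harmful r i a b) (hb : b ∉ topSet r i) : r a b := by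
  rcases h with ⟨hb', -⟩ | ⟨-, -, h⟩
  exacts [absurd hb' hb, h]

theorem harmful_of_not_mem_topSet (ha : a ∉ topSet r i) (h : b ∈ topSet r i ∨ r a b) :
    harmful r i a b := by
  by_cases hb : b ∈ topSet r i
  · exact Or.inl ⟨hb, fun ha' => absurd ha' ha⟩
  · exact Or.inr ⟨ha, hb, h.resolve_left hb⟩

theorem IsReversal.choice_mem_topSet [DecidableEq X] {c : Finset X → X} (hr : IsSLO r)
    {I : Finset ℕ} (hI : ∀ A : Finset X, A.Nonempty → ∃ i ∈ I, IsMaxOf (harmful r i) A (c A))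
    (hk : ∀ i ∈ I, i ≤ k) {A B : Finset X} (h : IsReversal c A B) :
    c A ∈ topSet r k ∨ c B ∈ topSet r k := by
  obtain ⟨hA, hB, -, hne, hAB, hBA⟩ := h
  rw [Finset.mem_inter] at hAB hBA
  obtain ⟨i, hi, hmaxA⟩ := hI A hA
  obtain ⟨j, hj, hmaxB⟩ := hI B hB
  by_contra! hout
  exact hr.1 _ _
    (rel_of_harmful (hmaxA.2 _ hBA.1 hne.symm) fun h => hout.2 (topSet_mono (hk i hi) h))
    (rel_of_harmful (hmaxB.2 _ hAB.2 hne) fun h => hout.1 (topSet_mono (hk j hj) h))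

end Harmful

section Revealed

variable [DecidableEq X] {c : Finset X → X} {x : X}

theorem isReversal_of_mem (hc : IsChoice c) {A B : Finset X} (hA : A.Nonempty)
    (hB : B.Nonempty) (hne : c A ≠ c B) (hAB : c A ∈ B) (hBA : c B ∈ A) : IsReversal c A B :=
  ⟨hA, hB, fun e => hne (by rw [e]), hne,
    Finset.mem_inter.2 ⟨hc A hA, hAB⟩, Finset.mem_inter.2 ⟨hBA, hc B hB⟩⟩

variable (hc : IsChoice c) (hx : ∀ A B : Finset X, IsReversal c A B → c A = x ∨ c B = x)
include hc hx

theorem choice_eq_of_subset {A B : Finset X} (hAB : A ⊆ B) (hA : A.Nonempty) (hBA : c B ∈ A)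
    (hAx : c A ≠ x) (hBx : c B ≠ x) : c A = c B := by
  by_contra hne
  rcases hx A B (isReversal_of_mem hc hA (hA.mono hAB) hne (hAB (hc A hA)) hBA) with h | h
  exacts [hAx h, hBx h]

theorem revealed_avoiding_asymm {y z : X} (hyz : y ≠ z)
    (h₁ : ∃ A : Finset X, x ∉ A ∧ z ∈ A ∧ c A = y)
    (h₂ : ∃ B : Finset X, x ∉ B ∧ y ∈ B ∧ c B = z) : False := by
  obtain ⟨A, hxA, hzA, rfl⟩ := h₁
  obtain ⟨B, hxB, hyB, rfl⟩ := h₂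
  have hA : A.Nonempty := ⟨_, hzA⟩
  have hB : B.Nonempty := ⟨_, hyB⟩
  rcases hx A B (isReversal_of_mem hc hA hB hyz hyB hzA) with h | h
  exacts [ne_of_mem_of_not_mem (hc A hA) hxA h, ne_of_mem_of_not_mem (hc B hB) hxB h]

theorem revealed_avoiding_trans {y z w : X}
    (h₁ : ∃ A : Finset X, x ∉ A ∧ z ∈ A ∧ c A = y)
    (h₂ : ∃ B : Finset X, x ∉ B ∧ w ∈ B ∧ c B = z) :
    ∃ C : Finset X, x ∉ C ∧ w ∈ C ∧ c C = y := by
  obtain ⟨A, hxA, hzA, rfl⟩ := h₁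
  obtain ⟨B, hxB, hwB, rfl⟩ := h₂
  have hA : A.Nonempty := ⟨_, hzA⟩
  have hB : B.Nonempty := ⟨_, hwB⟩
  have hxC : x ∉ A ∪ B := by simp [hxA, hxB]
  have hC : (A ∪ B).Nonempty := hA.mono Finset.subset_union_left
  have hCx := ne_of_mem_of_not_mem (hc _ hC) hxC
  have hCA : c (A ∪ B) ∈ A := by
    rcases Finset.mem_union.1 (hc _ hC) with h | h
    · exact h
    · rw [← choice_eq_of_subset hc hx Finset.subset_union_right hB h
        (ne_of_mem_of_not_mem (hc B hB) hxB) hCx]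
      exact hzA
  exact ⟨A ∪ B, hxC, Finset.mem_union_right _ hwB,
    (choice_eq_of_subset hc hx Finset.subset_union_left hA hCA
      (ne_of_mem_of_not_mem (hc A hA) hxA) hCx).symm⟩

theorem isStrictOrder_cxPref : IsStrictOrder X (cxPref c x) where
  irrefl a h := by
    rcases h with ⟨rfl, h⟩ | ⟨-, -, h, -⟩ <;> exact h rfl
  trans a b d hab hbd := by
    rcases hab with ⟨rfl, hbx⟩ | ⟨hax, hbx, hab, hPab⟩ <;>
      rcases hbd with ⟨rfl, -⟩ | ⟨-, hdx, -, hPbd⟩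
    · exact absurd rfl hbx
    · exact Or.inl ⟨rfl, hdx⟩
    · exact absurd rfl hbx
    · have had : a ≠ d := by
        rintro rfl
        exact revealed_avoiding_asymm hc hx hab hPab hPbd
      exact Or.inr ⟨hax, hdx, had, revealed_avoiding_trans hc hx hPab hPbd⟩

theorem exists_isSLO_extending_cxPref : ∃ r, IsSLO r ∧ ∀ y z, cxPref c x y z → r y z :=
  haveI := isStrictOrder_cxPref hc hx
  exists_isSLO_of_isStrictOrder _

omit [DecidableEq X] hx in
theorem isMaxOf_of_cxPref {r : X → X → Prop} (hcr : ∀ y z, cxPref c x y z → r y z)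
    {A : Finset X} (hA : A.Nonempty) (hxA : c A = x ∨ x ∉ A) : IsMaxOf r A (c A) := by
  refine ⟨hc A hA, fun z hz hzA => hcr _ _ ?_⟩
  rcases hxA with hcx | hxA
  · exact Or.inl ⟨hcx, hcx ▸ hzA⟩
  · exact Or.inr ⟨ne_of_mem_of_not_mem (hc A hA) hxA, ne_of_mem_of_not_mem hz hxA, hzA.symm,
      A, hxA, hz, rfl⟩

theorem isMaxOf_harmful_one_of_cxPref [Finite X] {r : X → X → Prop} (hr : IsSLO r)
    (hcr : ∀ y z, cxPref c x y z → r y z) {A : Finset X} (hA : A.Nonempty) (hxA : x ∈ A)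
    (hcx : c A ≠ x) : IsMaxOf (harmful r 1) A (c A) := by
  have htop : topSet r 1 = {x} :=
    topSet_one_eq_singleton hr fun b hb => hcr _ _ (Or.inl ⟨rfl, hb⟩)
  have hmem : c A ∈ A.erase x := Finset.mem_erase.2 ⟨hcx, hc A hA⟩
  have herase : c (A.erase x) = c A :=
    choice_eq_of_subset hc hx (Finset.erase_subset x A) ⟨_, hmem⟩ hmem
      (ne_of_mem_of_not_mem (hc _ ⟨_, hmem⟩) (Finset.notMem_erase x A)) hcx
  refine ⟨hc A hA, fun z hz hzA => harmful_of_not_mem_topSet (by rw [htop]; exact hcx) ?_⟩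
  rcases eq_or_ne z x with rfl | hzx
  · left
    rw [htop]
    rfl
  · exact Or.inr (hcr _ _ (Or.inr ⟨hcx, hzx, hzA.symm, A.erase x, Finset.notMem_erase x A,
      Finset.mem_erase.2 ⟨hzx, hz⟩, herase⟩))

theorem rsp_zero_one_of_cxPref [Fintype X] (hcard : 2 ≤ Fintype.card X) {r : X → X → Prop}
    (hr : IsSLO r) (hcr : ∀ y z, cxPref c x y z → r y z) : RSP c r {0, 1} := by
  refine ⟨Finset.insert_nonempty _ _, fun i hi => ?_, fun A hA => ?_⟩
  · simp only [Finset.mem_insert, Finset.mem_singleton] at hi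
    omega
  · by_cases h : c A = x ∨ x ∉ A
    · exact ⟨0, by simp, by rw [harmful_zero]; exact isMaxOf_of_cxPref hc hcr hA h⟩
    · rw [not_or, not_not] at h
      exact ⟨1, by simp, isMaxOf_harmful_one_of_cxPref hc hx hr hcr hA h.2 h.1⟩

end Revealed

/-- `sp c` is the least `m` with `IsRSPDegree c m`. -/
def IsRSPDegree [Fintype X] (c : Finset X → X) (m : ℕ) : Prop :=
  ∃ r : X → X → Prop, IsSLO r ∧ ∃ I : Finset ℕ, RSP c r I ∧ m ∈ I ∧ ∀ i ∈ I, i ≤ m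

section Degree

variable [Fintype X] [DecidableEq X] {c : Finset X → X}

theorem isRSPDegree_zero_iff [Nonempty X] (hc : IsChoice c) :
    IsRSPDegree c 0 ↔ ¬ ∃ A B : Finset X, IsReversal c A B := by
  constructor
  · rintro ⟨r, hr, I, ⟨-, -, hI⟩, -, hI0⟩ ⟨A, B, h⟩
    simpa using h.choice_mem_topSet hr hI hI0
  · intro hno
    have hx : ∀ A B, IsReversal c A B → c A = c Finset.univ ∨ c B = c Finset.univ :=
      fun A B h => (hno ⟨A, B, h⟩).elim
    obtain ⟨r, hr, hcr⟩ := exists_isSLO_extending_cxPref hc hx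
    have hchoice : ∀ A : Finset X, A.Nonempty → c A = c Finset.univ ∨ c Finset.univ ∉ A := by
      intro A hA
      by_contra! h
      exact hno ⟨A, _, isReversal_of_mem hc hA Finset.univ_nonempty h.1 (Finset.mem_univ _) h.2⟩
    refine ⟨r, hr, {0}, ⟨Finset.singleton_nonempty 0, by simp, fun A hA => ?_⟩, by simp, by simp⟩
    exact ⟨0, by simp, by rw [harmful_zero]; exact isMaxOf_of_cxPref hc hcr hA (hchoice A hA)⟩

theorem isRSPDegree_one_iff [Nonempty X] (hc : IsChoice c) (hcard : 2 ≤ Fintype.card X) :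
    IsRSPDegree c 1 ↔ ∃ x : X, ∀ A B : Finset X, IsReversal c A B → c A = x ∨ c B = x := by
  constructor
  · rintro ⟨r, hr, I, ⟨-, -, hI⟩, -, hI1⟩
    rcases (topSet_one_subsingleton hr).eq_empty_or_singleton with htop | ⟨x, htop⟩
    · exact ⟨Classical.arbitrary X, fun A B h => by
        simpa [htop] using h.choice_mem_topSet hr hI hI1⟩
    · exact ⟨x, fun A B h => by simpa [htop] using h.choice_mem_topSet hr hI hI1⟩
  · rintro ⟨x, hx⟩
    obtain ⟨r, hr, hcr⟩ := exists_isSLO_extending_cxPref hc hx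
    exact ⟨r, hr, {0, 1}, rsp_zero_one_of_cxPref hc hx hcard hr hcr, by simp, by simp⟩

end Degree

theorem stmt3 [Fintype X] [DecidableEq X] (c : Finset X → X) (hc : IsChoice c)
    (hcard : 2 ≤ Fintype.card X) :
    sp c = 1 ↔
      ((∃ A B : Finset X, IsReversal c A B) ∧
        ∃ x : X, ∀ A B : Finset X, IsReversal c A B → c A = x ∨ c B = x) := by
  have : Nonempty X := Fintype.card_pos_iff.mp (by omega)
  change sInf {m | IsRSPDegree c m} = 1 ↔ _
  rw [Nat.sInf_eq_one_iff]
  change IsRSPDegree c 1 ∧ ¬ IsRSPDegree c 0 ↔ _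
  rw [isRSPDegree_one_iff hc hcard, isRSPDegree_zero_iff hc, not_not, and_comm]
end

section
/- Let c be a choice function on a finite nonempty set X that violates WARP under constant selection, and let x* ∈ X be an item such that every reversal (A, B) of c satisfies c(A) = x* or c(B) = x*. Define the binary relation ▷^{c,x*} on X by: x* ▷^{c,x*} y for every y ∈ X \ {x*}, and for distinct y, z ∈ X \ {x*}, y ▷^{c,x*} z iff there is a menu A with x* ∉ A, z ∈ A and y = c(A). Then ▷^{c,x*} is a strict linear order on X (asymmetric, transitive, complete). -/
variable {X : Type*}

/-!
Every reversal selects `x*`, so `c` satisfies WARP on the menus avoiding `x*`.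
On those menus the revealed preference is therefore asymmetric, complete (look at binary menus)
and transitive: if `c A = a`, `c B = b ∈ A` and `d ∈ B`, then the choice from `A ∪ B` lies in
`A` and so equals `a`. Putting `x*` on top of this order gives `▷^{c,x*}`.
-/

section

variable [DecidableEq X] {c : Finset X → X} {x : X}

theorem choice_eq_of_mem_of_mem (hc : IsChoice c)
    (hconst : ∀ A B : Finset X, IsReversal c A B → c A = x ∨ c B = x)
    {A B : Finset X} (hxA : x ∉ A) (hxB : x ∉ B) (hAB : c A ∈ B) (hBA : c B ∈ A) :
    c A = c B := by
  by_contra hne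
  have hA : c A ∈ A := hc A ⟨c B, hBA⟩
  have hB : c B ∈ B := hc B ⟨c A, hAB⟩
  have hrev : IsReversal c A B :=
    ⟨⟨_, hA⟩, ⟨_, hB⟩, fun h => hne (by rw [h]), hne,
      Finset.mem_inter.2 ⟨hA, hAB⟩, Finset.mem_inter.2 ⟨hBA, hB⟩⟩
  rcases hconst A B hrev with h | h
  · exact hxA (h ▸ hA)
  · exact hxB (h ▸ hB)

theorem choice_eq_of_subset_s4 (hc : IsChoice c)
    (hconst : ∀ A B : Finset X, IsReversal c A B → c A = x ∨ c B = x)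
    {A U : Finset X} (hxU : x ∉ U) (hAU : A ⊆ U) (hUA : c U ∈ A) : c U = c A :=
  choice_eq_of_mem_of_mem hc hconst hxU (fun h => hxU (hAU h)) hUA (hAU (hc A ⟨_, hUA⟩))

theorem cxPref_asymm (hc : IsChoice c)
    (hconst : ∀ A B : Finset X, IsReversal c A B → c A = x ∨ c B = x)
    {a b : X} (hab : cxPref c x a b) : ¬ cxPref c x b a := by
  rcases hab with ⟨rfl, hb⟩ | ⟨ha, hb, hne, A, hxA, hbA, rfl⟩
  · rintro (⟨hb', -⟩ | ⟨-, ha', -⟩)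
    exacts [hb hb', ha' rfl]
  · rintro (⟨hb', -⟩ | ⟨-, -, -, B, hxB, haB, rfl⟩)
    exacts [hb hb', hne (choice_eq_of_mem_of_mem hc hconst hxA hxB haB hbA)]

theorem cxPref_trans (hc : IsChoice c)
    (hconst : ∀ A B : Finset X, IsReversal c A B → c A = x ∨ c B = x)
    {a b d : X} (hab : cxPref c x a b) (hbd : cxPref c x b d) : cxPref c x a d := by
  rcases hab with ⟨ha, hb⟩ | ⟨ha, hb, hab, A, hxA, hbA, rfl⟩ <;>
    rcases hbd with ⟨hb', -⟩ | ⟨-, hd, hbd, B, hxB, hdB, rfl⟩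
  · exact absurd hb' hb
  · exact Or.inl ⟨ha, hd⟩
  · exact absurd hb' hb
  have hxU : x ∉ A ∪ B := by simp [hxA, hxB]
  have had : c A ≠ d := by
    rintro rfl
    exact hab (choice_eq_of_mem_of_mem hc hconst hxA hxB hdB hbA)
  -- if the choice from `A ∪ B` lies in `B`, it is `c B`, which lies in `A`
  have hUA : c (A ∪ B) ∈ A := by
    rcases Finset.mem_union.1 (hc (A ∪ B) ⟨d, Finset.mem_union_right _ hdB⟩) with h | h
    · exact h
    · rwa [choice_eq_of_subset_s4 hc hconst hxU Finset.subset_union_right h]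
  exact Or.inr ⟨ha, hd, had, A ∪ B, hxU, Finset.mem_union_right _ hdB,
    choice_eq_of_subset_s4 hc hconst hxU Finset.subset_union_left hUA⟩

theorem cxPref_total (hc : IsChoice c) {a b : X} (hab : a ≠ b) :
    cxPref c x a b ∨ cxPref c x b a := by
  by_cases ha : a = x
  · exact Or.inl (Or.inl ⟨ha, fun hb => hab (ha.trans hb.symm)⟩)
  by_cases hb : b = x
  · exact Or.inr (Or.inl ⟨hb, ha⟩)
  have hx : x ∉ ({a, b} : Finset X) := by simp [Ne.symm ha, Ne.symm hb]
  rcases Finset.mem_insert.1 (hc {a, b} ⟨a, by simp⟩) with h | h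
  · exact Or.inl (Or.inr ⟨ha, hb, hab, {a, b}, hx, by simp, h⟩)
  · exact Or.inr (Or.inr ⟨hb, ha, Ne.symm hab, {a, b}, hx, by simp, Finset.mem_singleton.1 h⟩)

end

theorem stmt4_general [DecidableEq X] (c : Finset X → X) (hc : IsChoice c)
    (x : X)
    (hconst : ∀ A B : Finset X, IsReversal c A B → c A = x ∨ c B = x) :
    IsSLO (cxPref c x) :=
  ⟨fun _ _ => cxPref_asymm hc hconst, fun _ _ _ => cxPref_trans hc hconst,
    fun _ _ => cxPref_total hc⟩

theorem stmt4 [Fintype X] [DecidableEq X] (c : Finset X → X) (hc : IsChoice c)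
    (x : X)
    (hrev : ∃ A B : Finset X, IsReversal c A B)
    (hconst : ∀ A B : Finset X, IsReversal c A B → c A = x ∨ c B = x) :
    IsSLO (cxPref c x) :=
  stmt4_general c hc x hconst
end

section
/- Let c be a choice function on a finite nonempty set X that violates WARP under constant selection, and let x* ∈ X be an item such that every reversal (A, B) of c satisfies c(A) = x* or c(B) = x*. Let ▷^{c,x*} be the strict linear order on X defined by: x* ▷^{c,x*} y for every y ∈ X \ {x*}, and for distinct y, z ∈ X \ {x*}, y ▷^{c,x*} z iff there is a menu A with x* ∉ A, z ∈ A and y = c(A). Then the pair {▷^{c,x*}, ▷^{c,x*}_1} is a rationalization by self-punishment of c by ▷^{c,x*}: for every menu A, either c(A) = max(A, ▷^{c,x*}) or c(A) = max(A, ▷^{c,x*}_1). -/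
variable {X : Type*}

/-!
Since `x` is `▷^{c,x}`-top, the first harmful distortion only moves `x` to the bottom. If `c A = x`,
or `x ∉ A`, then `c A` is the `▷^{c,x}`-maximum of `A` by the definition of `▷^{c,x}`. Otherwise
`c (A \ {x}) = c A`, for else `(A, A \ {x})` would be a reversal selecting `x` in neither menu;
so `A \ {x}` reveals `c A ▷^{c,x} y` for every other `y ∈ A \ {x}`, and `c A` is the maximum of `A`
for the distortion, which ranks `x` last.
-/

theorem mem_topSet_one_iff [Finite X] {r : X → X → Prop} {a : X} :
    a ∈ topSet r 1 ↔ ∀ b, ¬ r b a := by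
  rw [topSet, Set.mem_ofPred_eq, Nat.lt_one_iff, Set.ncard_eq_zero,
    Set.eq_empty_iff_forall_notMem]
  rfl

theorem harmful_of_mem_topSet {r : X → X → Prop} {i : ℕ} {a b : X}
    (ha : a ∉ topSet r i) (hb : b ∈ topSet r i) : harmful r i a b :=
  Or.inl ⟨hb, fun h => absurd h ha⟩

theorem harmful_of_notMem_topSet {r : X → X → Prop} {i : ℕ} {a b : X}
    (ha : a ∉ topSet r i) (hb : b ∉ topSet r i) (hab : r a b) : harmful r i a b :=
  Or.inr ⟨ha, hb, hab⟩

section RevealedPreference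

variable {c : Finset X → X} {x : X}

theorem cxPref_of_mem {A : Finset X} {y : X} (hxA : x ∉ A) (hcA : c A ∈ A) (hyA : y ∈ A)
    (hy : y ≠ c A) : cxPref c x (c A) y :=
  Or.inr ⟨fun h => hxA (h ▸ hcA), fun h => hxA (h ▸ hyA), hy.symm, A, hxA, hyA, rfl⟩

theorem mem_topSet_cxPref_one_iff [Finite X] {a : X} : a ∈ topSet (cxPref c x) 1 ↔ a = x := by
  rw [mem_topSet_one_iff]
  constructor
  · intro h
    by_contra hax
    exact h x (Or.inl ⟨rfl, hax⟩)
  · rintro rfl b (⟨_, hne⟩ | ⟨_, hne, _⟩) <;> exact hne rfl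

theorem isMaxOf_cxPref_of_eq {A : Finset X} (hcA : c A ∈ A) (hx : c A = x) :
    IsMaxOf (cxPref c x) A (c A) :=
  ⟨hcA, fun _ _ hy => Or.inl ⟨hx, fun h => hy (h.trans hx.symm)⟩⟩

theorem isMaxOf_cxPref_of_notMem {A : Finset X} (hcA : c A ∈ A) (hxA : x ∉ A) :
    IsMaxOf (cxPref c x) A (c A) :=
  ⟨hcA, fun _ hy hne => cxPref_of_mem hxA hcA hy hne⟩

variable [DecidableEq X]

theorem choice_erase_eq (hc : IsChoice c)
    (hconst : ∀ A B : Finset X, IsReversal c A B → c A = x ∨ c B = x)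
    {A : Finset X} (hA : (A.erase x).Nonempty) (hxA : x ∈ A) (hx : c A ≠ x) :
    c (A.erase x) = c A := by
  have hcA : c A ∈ A.erase x := Finset.mem_erase.2 ⟨hx, hc A (hA.mono (A.erase_subset x))⟩
  have hcB : c (A.erase x) ∈ A.erase x := hc _ hA
  by_contra hne
  have hrev : IsReversal c A (A.erase x) :=
    ⟨hA.mono (A.erase_subset x), hA, fun h => A.notMem_erase x (h ▸ hxA), Ne.symm hne,
      Finset.mem_inter.2 ⟨Finset.mem_of_mem_erase hcA, hcA⟩,
      Finset.mem_inter.2 ⟨Finset.mem_of_mem_erase hcB, hcB⟩⟩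
  rcases hconst A (A.erase x) hrev with h | h
  · exact hx h
  · exact (Finset.mem_erase.1 hcB).1 h

theorem isMaxOf_harmful_one_cxPref [Finite X] (hc : IsChoice c)
    (hconst : ∀ A B : Finset X, IsReversal c A B → c A = x ∨ c B = x)
    {A : Finset X} (hA : A.Nonempty) (hxA : x ∈ A) (hx : c A ≠ x) :
    IsMaxOf (harmful (cxPref c x) 1) A (c A) := by
  have hcA_top : c A ∉ topSet (cxPref c x) 1 := fun h => hx (mem_topSet_cxPref_one_iff.1 h)
  refine ⟨hc A hA, fun y hy hne => ?_⟩
  by_cases hyx : y = x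
  · exact harmful_of_mem_topSet hcA_top (mem_topSet_cxPref_one_iff.2 hyx)
  have hyB : y ∈ A.erase x := Finset.mem_erase.2 ⟨hyx, hy⟩
  have hcB : c (A.erase x) = c A := choice_erase_eq hc hconst ⟨y, hyB⟩ hxA hx
  refine harmful_of_notMem_topSet hcA_top (fun h => hyx (mem_topSet_cxPref_one_iff.1 h)) ?_
  rw [← hcB]
  exact cxPref_of_mem (A.notMem_erase x) (hc _ ⟨y, hyB⟩) hyB (hcB ▸ hne)

end RevealedPreference

theorem stmt5_general [Fintype X] [DecidableEq X] (c : Finset X → X) (hc : IsChoice c)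
    (x : X)
    (hconst : ∀ A B : Finset X, IsReversal c A B → c A = x ∨ c B = x) :
    ∀ A : Finset X, A.Nonempty →
      IsMaxOf (cxPref c x) A (c A) ∨ IsMaxOf (harmful (cxPref c x) 1) A (c A) := by
  intro A hA
  by_cases hx : c A = x
  · exact Or.inl (isMaxOf_cxPref_of_eq (hc A hA) hx)
  by_cases hxA : x ∈ A
  · exact Or.inr (isMaxOf_harmful_one_cxPref hc hconst hA hxA hx)
  · exact Or.inl (isMaxOf_cxPref_of_notMem (hc A hA) hxA)

theorem stmt5 [Fintype X] [DecidableEq X] (c : Finset X → X) (hc : IsChoice c)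
    (x : X)
    (hrev : ∃ A B : Finset X, IsReversal c A B)
    (hconst : ∀ A B : Finset X, IsReversal c A B → c A = x ∨ c B = x) :
    ∀ A : Finset X, A.Nonempty →
      IsMaxOf (cxPref c x) A (c A) ∨ IsMaxOf (harmful (cxPref c x) 1) A (c A) :=
  stmt5_general c hc x hconst
end

section
/- Let c be a choice function on a finite nonempty set X, let ▷ be a strict linear order on X with X = {x^▷_1, …, x^▷_{|X|}} enumerated in decreasing ▷-order, and let Harm_c(▷) be a rationalization by self-punishment of c by ▷ with max{ i : ▷_i ∈ Harm_c(▷) } = j for some 0 ≤ j ≤ |X|−1. Then there is no reversal (A, B) of c such that c(A) ≠ x^▷_h ≠ c(B) for every h ∈ {1, …, j}. -/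
variable {X : Type*}

/-! An item outside `e 1, …, e j` has at least `j` items above it, so it is never among the top
`i ≤ j` items that a distortion used by the rationalization moves down, and on such items every
distortion used agrees with `r`. The two maxima of a reversal avoiding `e 1, …, e j` would thus be
`r`-above each other. -/

theorem rel_of_harmful_of_notMem_topSet {r : X → X → Prop} {i : ℕ} {a b : X}
    (hb : b ∉ topSet r i) (hab : harmful r i a b) : r a b :=
  (hab.resolve_left fun h => hb h.1).2.2

theorem notMem_topSet_iff {r : X → X → Prop} {i : ℕ} {x : X} :
    x ∉ topSet r i ↔ i ≤ {b | r b x}.ncard := by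
  simp [topSet]

theorem sub_one_le_ncard_setOf_rel_of_chain [Finite X] {r : X → X → Prop}
    (hirr : ∀ a, ¬ r a a) {e : ℕ → X} {n : ℕ}
    (hord : ∀ g h : ℕ, 1 ≤ g → g < h → h ≤ n → r (e g) (e h)) {h : ℕ} (hh : h ≤ n) :
    h - 1 ≤ {b | r b (e h)}.ncard := by
  have hinj : Set.InjOn e (Set.Icc 1 (h - 1)) := by
    intro a ⟨ha1, ha2⟩ b ⟨hb1, hb2⟩ hab
    by_contra hne
    rcases lt_or_gt_of_ne hne with hlt | hlt
    · exact hirr (e b) (hab ▸ hord a b ha1 hlt (by omega))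
    · exact hirr (e a) (hab ▸ hord b a hb1 hlt (by omega))
  have hsub : e '' Set.Icc 1 (h - 1) ⊆ {b | r b (e h)} := by
    rintro _ ⟨g, ⟨hg1, hgh⟩, rfl⟩
    exact hord g h hg1 (by omega) hh
  calc h - 1 = (e '' Set.Icc 1 (h - 1)).ncard := by
        rw [hinj.ncard_image, ← Finset.coe_Icc, Set.ncard_coe_finset,
          Nat.card_Icc]
        omega
    _ ≤ {b | r b (e h)}.ncard := Set.ncard_le_ncard hsub

theorem notMem_topSet_of_forall_ne_enum [Fintype X] {r : X → X → Prop} (hirr : ∀ a, ¬ r a a)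
    {e : ℕ → X} (hsurj : ∀ x : X, ∃ h : ℕ, 1 ≤ h ∧ h ≤ Fintype.card X ∧ e h = x)
    (hord : ∀ h i : ℕ, 1 ≤ h → h < i → i ≤ Fintype.card X → r (e h) (e i))
    {j i : ℕ} (hij : i ≤ j) {x : X} (hx : ∀ h : ℕ, 1 ≤ h → h ≤ j → x ≠ e h) :
    x ∉ topSet r i := by
  obtain ⟨h, h1, hcard, rfl⟩ := hsurj x
  have hjh : j < h := by
    by_contra! hhj
    exact hx h h1 hhj rfl
  rw [notMem_topSet_iff]
  have := sub_one_le_ncard_setOf_rel_of_chain hirr hord hcard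
  omega

theorem stmt9_general [Fintype X] [DecidableEq X] (c : Finset X → X)
    (r : X → X → Prop) (hr : IsSLO r)
    (e : ℕ → X)
    (hsurj : ∀ x : X, ∃ h : ℕ, 1 ≤ h ∧ h ≤ Fintype.card X ∧ e h = x)
    (hord : ∀ h i : ℕ, 1 ≤ h → h < i → i ≤ Fintype.card X → r (e h) (e i))
    (j : ℕ)
    (I : Finset ℕ) (hI : RSP c r I) (hmax : ∀ i ∈ I, i ≤ j) :
    ¬ ∃ A B : Finset X, IsReversal c A B ∧
      ∀ h : ℕ, 1 ≤ h → h ≤ j → c A ≠ e h ∧ c B ≠ e h := by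
  rintro ⟨A, B, ⟨hA, hB, -, hne, hcA, hcB⟩, hout⟩
  have hirr : ∀ a, ¬ r a a := fun a h => hr.1 a a h h
  have hnotTop {x : X} (hx : ∀ h, 1 ≤ h → h ≤ j → x ≠ e h) {i : ℕ} (hi : i ∈ I) :
      x ∉ topSet r i :=
    notMem_topSet_of_forall_ne_enum hirr hsurj hord (hmax i hi) hx
  obtain ⟨i, hi, hmaxA⟩ := hI.2.2 A hA
  obtain ⟨i', hi', hmaxB⟩ := hI.2.2 B hB
  have hAB : r (c A) (c B) :=
    rel_of_harmful_of_notMem_topSet (hnotTop (fun h h1 h2 => (hout h h1 h2).2) hi)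
      (hmaxA.2 (c B) (Finset.mem_inter.1 hcB).1 (Ne.symm hne))
  have hBA : r (c B) (c A) :=
    rel_of_harmful_of_notMem_topSet (hnotTop (fun h h1 h2 => (hout h h1 h2).1) hi')
      (hmaxB.2 (c A) (Finset.mem_inter.1 hcA).2 hne)
  exact hr.1 _ _ hAB hBA

theorem stmt9 [Fintype X] [DecidableEq X] (c : Finset X → X) (hc : IsChoice c)
    (r : X → X → Prop) (hr : IsSLO r)
    (e : ℕ → X)
    (hsurj : ∀ x : X, ∃ h : ℕ, 1 ≤ h ∧ h ≤ Fintype.card X ∧ e h = x)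
    (hord : ∀ h i : ℕ, 1 ≤ h → h < i → i ≤ Fintype.card X → r (e h) (e i))
    (j : ℕ) (hj : j ≤ Fintype.card X - 1)
    (I : Finset ℕ) (hI : RSP c r I) (hjI : j ∈ I) (hmax : ∀ i ∈ I, i ≤ j) :
    ¬ ∃ A B : Finset X, IsReversal c A B ∧
      ∀ h : ℕ, 1 ≤ h → h ≤ j → c A ≠ e h ∧ c B ≠ e h :=
  stmt9_general c r hr e hsurj hord j I hI hmax
end

section
/- Let c be a choice function on a finite nonempty set X with |X| ≥ 2. Then c violates WARP under constant nonreciprocal selection of |X|−1 items if and only if c is inconsistent, i.e., for all distinct x, y ∈ X there is a reversal (A, B) of c with c(A) = x and c(B) = y. -/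
/-!
With `n = |X|`, avoiding every set of fewer than `n - 1` items means that every pair of
distinct items is hit by a reversal, which is inconsistency. Conversely, a set of `n - 1`
items leaves a single item outside, so it meets every reversal, and inconsistency pairs each
of its items with that outsider.
-/

variable {X : Type*}

open Finset

section Reversal

variable [DecidableEq X] {c : Finset X → X} {A B : Finset X}

theorem IsReversal.symm (h : IsReversal c A B) : IsReversal c B A := by
  obtain ⟨hA, hB, hAB, hcAB, hcA, hcB⟩ := h
  exact ⟨hB, hA, hAB.symm, hcAB.symm, inter_comm A B ▸ hcB, inter_comm A B ▸ hcA⟩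

theorem IsReversal.mem_or_mem_of_card_compl_le_one [Fintype X] {xs : Finset X}
    (hxs : #xsᶜ ≤ 1) (h : IsReversal c A B) : c A ∈ xs ∨ c B ∈ xs := by
  by_contra! hout
  exact h.2.2.2.1 (card_le_one.mp hxs _ (mem_compl.mpr hout.1) _ (mem_compl.mpr hout.2))

end Reversal

section Inconsistent

variable [Fintype X] [DecidableEq X] {c : Finset X → X}

theorem inconsistent_iff_forall_card_lt :
    Inconsistent c ↔ ∀ D : Finset X, #D < Fintype.card X - 1 →
      ∃ A B : Finset X, IsReversal c A B ∧ c A ∉ D ∧ c B ∉ D := by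
  constructor
  · intro hinc D hD
    obtain ⟨x, hx, y, hy, hxy⟩ : ∃ x ∈ Dᶜ, ∃ y ∈ Dᶜ, x ≠ y := by
      rw [← one_lt_card, card_compl]
      omega
    obtain ⟨A, B, hrev, rfl, rfl⟩ := hinc x y hxy
    exact ⟨A, B, hrev, mem_compl.mp hx, mem_compl.mp hy⟩
  · intro hD x y hxy
    have hpair : #({x, y} : Finset X) = 2 := card_pair hxy
    have hcard : #({x, y}ᶜ : Finset X) < Fintype.card X - 1 := by
      have := card_le_univ ({x, y} : Finset X)
      rw [card_compl]
      omega
    obtain ⟨A, B, hrev, hA, hB⟩ := hD _ hcard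
    simp only [mem_compl, mem_insert, mem_singleton, not_not] at hA hB
    have hne := hrev.2.2.2.1
    rcases hA with hA | hA <;> rcases hB with hB | hB
    · exact absurd (hA.trans hB.symm) hne
    · exact ⟨A, B, hrev, hA, hB⟩
    · exact ⟨B, A, hrev.symm, hB, hA⟩
    · exact absurd (hA.trans hB.symm) hne

end Inconsistent

theorem stmt17_general [Fintype X] [DecidableEq X] (c : Finset X → X) :
    ViolatesCNS c (Fintype.card X - 1) ↔ Inconsistent c := by
  rw [ViolatesCNS, ← inconsistent_iff_forall_card_lt]
  refine ⟨And.left, fun hinc => ⟨hinc, ?_⟩⟩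
  obtain ⟨xs, -, hxs⟩ := exists_subset_card_eq (Nat.sub_le (#(univ : Finset X)) 1)
  rw [card_univ] at hxs
  have hcompl : #xsᶜ ≤ 1 := by
    rw [card_compl]
    omega
  refine ⟨xs, hxs, fun A B => IsReversal.mem_or_mem_of_card_compl_le_one hcompl,
    fun x hx => ?_⟩
  obtain ⟨y, hy⟩ : xsᶜ.Nonempty := by
    rw [← card_pos, card_compl]
    have := card_pos.mpr ⟨x, hx⟩
    omega
  obtain ⟨A, B, hrev, hA, hB⟩ := hinc x y (ne_of_mem_of_not_mem hx (mem_compl.mp hy))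
  exact ⟨A, B, y, hrev, mem_compl.mp hy, Or.inl ⟨hA, hB⟩⟩

theorem stmt17 [Fintype X] [DecidableEq X] (c : Finset X → X) (hc : IsChoice c)
    (hcard : 2 ≤ Fintype.card X) :
    ViolatesCNS c (Fintype.card X - 1) ↔ Inconsistent c :=
  stmt17_general c
end
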